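/- arXiv:1408.0050 — 3 statements merged into one kernel-verified Lean document; each statement's English description precedes it below -/
import Mathlib

section
/- Let C be a category with all (small) products, B an object of C, and A a set. The endofunctor F(X) = B × X^A on C has a final coalgebra with carrier B^(A*), where A* is the set of finite words over A. The coalgebra structure ω : B^(A*) → B × (B^(A*))^A has first component the projection π_ε and second component, at letter a and word u, the projection π_{au}. -/
/-!
A coalgebra `c : X ⟶ B ⨯ X^A` is a generalized automaton: `c ≫ prod.fst` is its output and
`c ≫ prod.snd ≫ Pi.π _ a` its transition on the letter `a`. A morphism `h : X ⟶ B^(A*)` is a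
coalgebra morphism exactly when its components satisfy `h_ε = output` and
`h_{au} = (transition on a) ≫ h_u`; by induction on words, the only solution is the behaviour
of the automaton, i.e. the output after reading a word.
-/

open CategoryTheory CategoryTheory.Limits

namespace CategoryTheory.GeneralizedAutomaton

variable {C : Type*} [Category C] [HasProducts C] {B X : C} {A : Type*}

noncomputable def behaviour (c : X ⟶ B ⨯ ∏ᶜ fun _ : A => X) : List A → (X ⟶ B)
  | [] => c ≫ prod.fst
  | a :: u => c ≫ prod.snd ≫ Pi.π _ a ≫ behaviour c u

variable (B A) in
noncomputable def wordsCoalgebra :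
    (∏ᶜ fun _ : List A => B) ⟶ B ⨯ ∏ᶜ fun _ : A => ∏ᶜ fun _ : List A => B :=
  prod.lift (Pi.π _ []) (Pi.lift fun a => Pi.lift fun u => Pi.π _ (a :: u))

theorem comp_wordsCoalgebra_eq_iff (c : X ⟶ B ⨯ ∏ᶜ fun _ : A => X)
    (h : X ⟶ ∏ᶜ fun _ : List A => B) :
    h ≫ wordsCoalgebra B A = c ≫ prod.map (𝟙 B) (Limits.Pi.map fun _ => h) ↔
      h ≫ Pi.π _ [] = c ≫ prod.fst ∧
        ∀ a u, h ≫ Pi.π _ (a :: u) = c ≫ prod.snd ≫ Pi.π _ a ≫ h ≫ Pi.π _ u := by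
  simp only [wordsCoalgebra]
  constructor
  · intro hh
    refine ⟨by simpa [prod.lift_fst] using hh =≫ prod.fst, fun a u => ?_⟩
    simpa [prod.lift_snd_assoc] using hh =≫ prod.snd ≫ Pi.π _ a ≫ Pi.π _ u
  · rintro ⟨h_nil, h_cons⟩
    ext
    · simpa [prod.lift_fst] using h_nil
    · simpa [prod.lift_snd_assoc] using h_cons _ _

theorem eq_lift_behaviour_iff (c : X ⟶ B ⨯ ∏ᶜ fun _ : A => X)
    (h : X ⟶ ∏ᶜ fun _ : List A => B) :
    h = Pi.lift (behaviour c) ↔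
      h ≫ Pi.π _ [] = c ≫ prod.fst ∧
        ∀ a u, h ≫ Pi.π _ (a :: u) = c ≫ prod.snd ≫ Pi.π _ a ≫ h ≫ Pi.π _ u := by
  constructor
  · rintro rfl
    simp [behaviour]
  · rintro ⟨h_nil, h_cons⟩
    refine Pi.hom_ext _ _ fun w => ?_
    induction w with
    | nil => simpa [behaviour] using h_nil
    | cons a u ih => simp_all [behaviour]

theorem comp_wordsCoalgebra_eq_iff_eq_lift_behaviour (c : X ⟶ B ⨯ ∏ᶜ fun _ : A => X)
    (h : X ⟶ ∏ᶜ fun _ : List A => B) :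
    h ≫ wordsCoalgebra B A = c ≫ prod.map (𝟙 B) (Limits.Pi.map fun _ => h) ↔
      h = Pi.lift (behaviour c) :=
  (comp_wordsCoalgebra_eq_iff c h).trans (eq_lift_behaviour_iff c h).symm

end CategoryTheory.GeneralizedAutomaton

/-- Let `C` be a category with all small products, `B : C` and `A` a set.
The endofunctor `F(X) = B × X^A` has a final coalgebra carried by the power
`B^(A*)` (where `A* = List A`), whose structure map `ω` has first component
the projection `π_ε` and second component, at letter `a` and word `u`, the
projection `π_{a·u}`: for every coalgebra `c : X ⟶ B × X^A` there is a
unique coalgebra morphism into `(B^(A*), ω)`. -/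
theorem final_coalgebra_of_generalized_automata
    {C : Type*} [Category C] [HasProducts C] [HasBinaryProducts C]
    (B : C) (A : Type _)
    (Ω : C) (hΩ : Ω = ∏ᶜ (fun _ : List A => B))
    (ω : Ω ⟶ B ⨯ (∏ᶜ (fun _ : A => Ω)))
    (hω : ω = eqToHom hΩ ≫
      prod.lift (Pi.π (fun _ : List A => B) ([] : List A))
        (Pi.lift (fun a : A =>
          (Pi.lift (fun u : List A =>
            Pi.π (fun _ : List A => B) (a :: u))) ≫ eqToHom hΩ.symm))) :
    ∀ (X : C) (c : X ⟶ B ⨯ (∏ᶜ (fun _ : A => X))),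
      ∃! h : X ⟶ Ω,
        h ≫ ω = c ≫ prod.map (𝟙 B) (Limits.Pi.map (fun _ : A => h)) := by
  subst hΩ
  have hω' : ω = GeneralizedAutomaton.wordsCoalgebra B A := by
    simp only [eqToHom_refl, Category.id_comp, Category.comp_id] at hω
    exact hω
  subst hω'
  intro X c
  have key := GeneralizedAutomaton.comp_wordsCoalgebra_eq_iff_eq_lift_behaviour c
  exact ⟨_, (key _).2 rfl, fun h => (key h).1⟩
end

section
/- In the category of sets, the functor F(X) = 2 × X^A (deterministic automata over alphabet A) has a final coalgebra with carrier the powerset P(A*) of languages over A, with output L ↦ (ε ∈ L) and transitions δ(L, a) = { u ∈ A* | a·u ∈ L }. Moreover, for any automaton with states X, transition δ : X × A → X, and accepting states U ⊆ X, the unique coalgebra morphism sends a state x to the language { u ∈ A* | δ*(x,u) ∈ U }, where δ* is the extension of δ to words. -/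
/-- Extension of a transition function `δ : X → A → X` to words:
`δ*(x, ε) = x` and `δ*(x, a·u) = δ*(δ(x,a), u)`. -/
def deltaStar {X A : Type*} (δ : X → A → X) : X → List A → X
  | x, [] => x
  | x, a :: u => deltaStar δ (δ x a) u

theorem mem_iff_deltaStar_mem_of_isCoalgebraHom {X A : Type*} {δ : X → A → X} {U : Set X}
    {h : X → Set (List A)} (h_nil : ∀ x, [] ∈ h x ↔ x ∈ U)
    (h_cons : ∀ x a, {u | a :: u ∈ h x} = h (δ x a)) :
    ∀ (u : List A) (x : X), u ∈ h x ↔ deltaStar δ x u ∈ U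
  | [], x => h_nil x
  | a :: u, x =>
    (Set.ext_iff.mp (h_cons x a) u).trans
      (mem_iff_deltaStar_mem_of_isCoalgebraHom h_nil h_cons u (δ x a))

/-- The powerset `P(A*)` of languages is the final deterministic automaton:
with output `L ↦ (ε ∈ L)` and transitions `δ(L,a) = {u | a·u ∈ L}`, for any
automaton `(X, δ, U)` the map `x ↦ {u | δ*(x,u) ∈ U}` is the unique
coalgebra morphism into it. -/
theorem final_deterministic_automaton {X A : Type*}
    (δ : X → A → X) (U : Set X) :
    -- the behaviour map is a coalgebra morphism:
    (∀ x : X, (([] : List A) ∈ {u : List A | deltaStar δ x u ∈ U} ↔ x ∈ U)) ∧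
    (∀ x : X, ∀ a : A,
      {u : List A | a :: u ∈ {v : List A | deltaStar δ x v ∈ U}} =
      {u : List A | deltaStar δ (δ x a) u ∈ U}) ∧
    -- uniqueness: any coalgebra morphism equals the behaviour map:
    (∀ h : X → Set (List A),
      (∀ x : X, (([] : List A) ∈ h x ↔ x ∈ U)) →
      (∀ x : X, ∀ a : A, {u : List A | a :: u ∈ h x} = h (δ x a)) →
      h = fun x => {u : List A | deltaStar δ x u ∈ U}) := by
  refine ⟨fun _ => Iff.rfl, fun _ _ => rfl, fun h h_nil h_cons => ?_⟩
  funext x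
  ext u
  exact mem_iff_deltaStar_mem_of_isCoalgebraHom h_nil h_cons u x
end

section
/- The convex subset of (D(4))^ℕ generated by the two streams σ = (δ₀, ½δ₁+½δ₂, δ₀, ½δ₁+½δ₂, …) and σ' = tail(σ) and closed under the tail map equals X = { (p·δ₀ + ½(1−p)·δ₁ + ½(1−p)·δ₂, (1−p)·δ₀ + ½p·δ₁ + ½p·δ₂)^ω | p ∈ [0,1] }, i.e., X is the smallest tail-closed convex subset of (D(4))^ℕ containing σ. Moreover the map sending the element of X with parameter p to p ∈ [0,1] is an affine bijection X ≅ [0,1]. -/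
open Set

/-- The stream of distributions on `{0,1,2,3}` parametrized by `p`. -/
noncomputable def pStream (p : ℝ) : ℕ → Fin 4 → ℝ := fun n =>
  if n % 2 = 0 then ![p, (1 - p) / 2, (1 - p) / 2, 0]
  else ![1 - p, p / 2, p / 2, 0]

/-- The output stream `σ = (δ₀, ½δ₁ + ½δ₂)^ω` of the square quantum walk. -/
noncomputable def sigmaStream : ℕ → Fin 4 → ℝ := pStream 1

/-- The set `X = { pStream p | p ∈ [0,1] }` of streams. -/
noncomputable def Xmin : Set (ℕ → Fin 4 → ℝ) :=
  { s | ∃ p ∈ Icc (0 : ℝ) 1, s = pStream p }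

lemma pStream_tail (p : ℝ) : (fun n => pStream p (n + 1)) = pStream (1 - p) := by
  funext n
  simp only [pStream, Nat.add_mod_right]
  rcases Nat.even_or_odd n with ⟨k, hk⟩ | ⟨k, hk⟩
  · have h1 : n % 2 = 0 := by omega
    have h2 : (n + 1) % 2 = 1 := by omega
    simp [h1, h2]
  · have h1 : n % 2 = 1 := by omega
    have h2 : (n + 1) % 2 = 0 := by omega
    simp [h1, h2, sub_sub_cancel]

lemma pStream_affine (a b p q : ℝ) (hab : a + b = 1) :
    pStream (a * p + b * q) = a • pStream p + b • pStream q := by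
  have hb : b = 1 - a := by linarith
  subst hb
  funext n i
  simp only [pStream, Pi.add_apply, Pi.smul_apply, smul_eq_mul]
  by_cases h : n % 2 = 0 <;> simp only [h, if_true, if_false, reduceIte] <;>
    fin_cases i <;> simp [Matrix.cons_val_zero, Matrix.cons_val_one] <;> ring

lemma pStream_inj : Function.Injective pStream := by
  intro p q h
  have := congrFun (congrFun h 0) 0
  simpa [pStream] using this

/-- `X = { (p·δ₀ + ½(1−p)·δ₁ + ½(1−p)·δ₂, (1−p)·δ₀ + ½p·δ₁ + ½p·δ₂)^ω }`
is the smallest convex, tail-closed subset of `D(4)^ℕ` containing `σ`,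
and the parametrization `p ↦ pStream p` is an affine bijection
`[0,1] ≅ X`. -/
theorem minimal_subcoalgebra_of_square_walk :
    -- X contains σ (and its tail)
    sigmaStream ∈ Xmin ∧
    (fun n => sigmaStream (n + 1)) ∈ Xmin ∧
    -- X is closed under tail
    (∀ s ∈ Xmin, (fun n => s (n + 1)) ∈ Xmin) ∧
    -- X is convex
    Convex ℝ Xmin ∧
    -- X is the smallest such set
    (∀ Y : Set (ℕ → Fin 4 → ℝ), sigmaStream ∈ Y →
      (∀ s ∈ Y, (fun n => s (n + 1)) ∈ Y) → Convex ℝ Y → Xmin ⊆ Y) ∧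
    -- p ↦ pStream p is an affine bijection [0,1] ≅ X
    Set.BijOn pStream (Icc (0 : ℝ) 1) Xmin ∧
    (∀ a b p q : ℝ, 0 ≤ a → 0 ≤ b → a + b = 1 →
      pStream (a * p + b * q) = a • pStream p + b • pStream q) := by
  refine ⟨⟨1, by norm_num, rfl⟩, ?_, ?_, ?_, ?_, ?_, ?_⟩
  · refine ⟨0, by norm_num, ?_⟩
    rw [show sigmaStream = pStream 1 from rfl, pStream_tail]
    norm_num
  · rintro s ⟨p, hp, rfl⟩
    exact ⟨1 - p, ⟨by linarith [hp.2], by linarith [hp.1]⟩, pStream_tail p⟩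
  · rintro _ ⟨p, hp, rfl⟩ _ ⟨q, hq, rfl⟩ a b ha hb hab
    refine ⟨a * p + b * q, ⟨by nlinarith [hp.1, hq.1], by nlinarith [hp.2, hq.2]⟩, ?_⟩
    exact (pStream_affine a b p q hab).symm
  · rintro Y hσ htail hconv _ ⟨p, hp, rfl⟩
    have h0 : pStream 0 ∈ Y := by
      have := htail sigmaStream hσ
      rwa [show sigmaStream = pStream 1 from rfl, pStream_tail, show (1:ℝ) - 1 = 0 by norm_num] at this
    have h1 : pStream 1 ∈ Y := hσ
    have hmem := hconv h1 h0 (a := p) (b := 1 - p) hp.1 (by linarith [hp.2]) (by ring)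
    have heq : pStream p = p • pStream 1 + (1 - p) • pStream 0 := by
      have h := pStream_affine p (1 - p) 1 0 (by ring)
      simpa using h
    rwa [heq]
  · refine ⟨fun p hp => ⟨p, hp, rfl⟩, fun p _ q _ h => pStream_inj h, ?_⟩
    rintro _ ⟨p, hp, rfl⟩
    exact ⟨p, hp, rfl⟩
  · intro a b p q _ _ hab
    exact pStream_affine a b p q hab
end
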